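/- Let k ≥ 2 and n ≥ 4 be integers and let H_{k,n} be the graph described in the context. Then the set of pairs {(u,v), (z_{1,1}, z_{1,2}),…,(z_{k−1,1}, z_{k−1,2})} is a pairing total dominating set of H_{k,n}; that is, for every choice x_0 ∈ {u,v} and x_i ∈ {z_{i,1}, z_{i,2}} for i = 1,…,k−1, the set {x_0, x_1,…,x_{k−1}} is a total dominating set of H_{k,n}. -/

import Mathlib

/-
Each `y_j` and each `z_{i,j}` with `j ∈ {1,2}` is adjacent to both `u` and `v`; every other
`z_{i,j}` lies in the `i`-th block `K_n` minus the edge `z_{i,1} z_{i,2}`, so it is adjacent to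
both `z_{i,1}` and `z_{i,2}`; finally `u` and `v` are adjacent to `z_{1,1}` and `z_{1,2}`,
which exist because `k ≥ 2`.
-/

/-- Vertices of `H_{k,n}`: the clique vertices `y_j` (`Sum.inl`), the vertices
`z_{i,j}` (`Sum.inr (Sum.inl (i,j))`, 0-indexed), and the two vertices
`u = Sum.inr (Sum.inr false)` and `v = Sum.inr (Sum.inr true)`. -/
abbrev HknV (k n : ℕ) := Fin n ⊕ ((Fin (k - 1) × Fin n) ⊕ Bool)

/-- Edge relation of `H_{k,n}`: the `y`'s form a `K_n`; for each `i` the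
`z_{i,·}`'s form a `K_n` minus the edge `z_{i,1} z_{i,2}` (0-indexed: second
coordinates `0` and `1`); both `u` and `v` are adjacent to every `y_j` and to
`z_{i,1}`, `z_{i,2}` for every `i`; `u` and `v` are nonadjacent. -/
def HknRel (k n : ℕ) : HknV k n → HknV k n → Prop
  | .inl _, .inl _ => True
  | .inr (.inl p), .inr (.inl q) =>
      p.1 = q.1 ∧ ¬((p.2.val = 0 ∧ q.2.val = 1) ∨ (p.2.val = 1 ∧ q.2.val = 0))
  | .inr (.inr _), .inl _ => True
  | .inr (.inr _), .inr (.inl p) => p.2.val = 0 ∨ p.2.val = 1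
  | _, _ => False

def Hkn (k n : ℕ) : SimpleGraph (HknV k n) := SimpleGraph.fromRel (HknRel k n)

def IsTotalDomSet {V : Type*} (G : SimpleGraph V) (D : Finset V) : Prop :=
  ∀ v : V, ∃ d ∈ D, G.Adj v d

namespace Hkn

variable {k n : ℕ}

theorem adj_inl_apex (j : Fin n) (b : Bool) :
    (Hkn k n).Adj (.inl j) (.inr (.inr b)) :=
  (SimpleGraph.fromRel_adj _ _ _).mpr ⟨by simp, Or.inr trivial⟩

theorem adj_apex_inr (b : Bool) {p : Fin (k - 1) × Fin n}
    (hp : p.2.val = 0 ∨ p.2.val = 1) :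
    (Hkn k n).Adj (.inr (.inr b)) (.inr (.inl p)) :=
  (SimpleGraph.fromRel_adj _ _ _).mpr ⟨by simp, Or.inl hp⟩

theorem adj_inr_of_ne {i : Fin (k - 1)} {j j' : Fin n} (hj : j.val ≠ 0 ∧ j.val ≠ 1)
    (hjj' : j ≠ j') :
    (Hkn k n).Adj (.inr (.inl (i, j))) (.inr (.inl (i, j'))) := by
  refine (SimpleGraph.fromRel_adj _ _ _).mpr ⟨by simpa using hjj', Or.inl ⟨rfl, ?_⟩⟩
  simp only
  omega

end Hkn

theorem stmt5_general (k n : ℕ) (hk : 2 ≤ k)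
    (b : Bool) (c : Fin (k - 1) → Fin n) (hc : ∀ i, (c i).val = 0 ∨ (c i).val = 1) :
    IsTotalDomSet (Hkn k n)
      (insert (Sum.inr (Sum.inr b))
        (Finset.image (fun i => Sum.inr (Sum.inl (i, c i))) Finset.univ)) := by
  set D := insert (Sum.inr (Sum.inr b))
    (Finset.image (fun i => (Sum.inr (Sum.inl (i, c i)) : HknV k n)) Finset.univ)
  have apex_mem : Sum.inr (Sum.inr b) ∈ D := Finset.mem_insert_self _ _
  have choice_mem (i : Fin (k - 1)) : Sum.inr (Sum.inl (i, c i)) ∈ D :=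
    Finset.mem_insert_of_mem (Finset.mem_image_of_mem _ (Finset.mem_univ i))
  rintro (j | ⟨i, j⟩ | a)
  · exact ⟨_, apex_mem, Hkn.adj_inl_apex j b⟩
  · by_cases hj : j.val = 0 ∨ j.val = 1
    · exact ⟨_, apex_mem, (Hkn.adj_apex_inr b hj).symm⟩
    · have hj' : j ≠ c i := fun h => hj (h ▸ hc i)
      exact ⟨_, choice_mem i, Hkn.adj_inr_of_ne (by omega) hj'⟩
  · let i₀ : Fin (k - 1) := ⟨0, by omega⟩
    exact ⟨_, choice_mem i₀, Hkn.adj_apex_inr a (hc i₀)⟩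

/-- `{(u,v), (z_{1,1},z_{1,2}), …, (z_{k-1,1},z_{k-1,2})}` is a pairing total
dominating set of `H_{k,n}`: for every choice `x_0 ∈ {u,v}` (given by a
Boolean `b`) and `x_i ∈ {z_{i,1}, z_{i,2}}` for each `i`, the set
`{x_0, x_1, …, x_{k-1}}` is a total dominating set of `H_{k,n}`. -/
theorem stmt5 (k n : ℕ) (hk : 2 ≤ k) (hn : 4 ≤ n)
    (b : Bool) (c : Fin (k - 1) → Fin n) (hc : ∀ i, (c i).val = 0 ∨ (c i).val = 1) :
    IsTotalDomSet (Hkn k n)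
      (insert (Sum.inr (Sum.inr b))
        (Finset.image (fun i => Sum.inr (Sum.inl (i, c i))) Finset.univ)) :=
  stmt5_general k n hk b c hc
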